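/- Let ε ≥ 0, α_0 > 0, α_1 > 0, and assume hypotheses (H). There exists a constant C > 0, depending only on λ, α_0, α_1, V, ΔΨ_0^pzc, ΔΨ_1^pzc, P^max, N^max and ρ_hl (and independent of the mesh, of Δt and of k), such that for every mesh, every time step and every solution of the scheme (S) satisfying 0 ≤ P_i^k ≤ P^max and 0 ≤ N_i^k ≤ N^max for all i, k, one has ‖Ψ_h^{k+1}‖_{1,T}² ≤ C for all 0 ≤ k ≤ K−1, and consequently Σ_{k=0}^{K−1} Δt ‖Ψ_h^{k+1}‖_{1,T}² ≤ C T, where Ψ_h^{k+1} is the piecewise constant function associated with (Ψ_i^{k+1})_{0 ≤ i ≤ I+1}. -/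

import Mathlib

open MeasureTheory Real Filter Topology

noncomputable section

namespace Corrosion

/-- The Bernoulli function `B(x) = x / (e^x - 1)`, `B(0) = 1`. -/
def Bern (x : ℝ) : ℝ := if x = 0 then 1 else x / (Real.exp x - 1)

/-- The two species: cations `P` and electrons `N`. -/
inductive Sp | P | N

/-- charge numbers: `z_P = 3`, `z_N = -1`. -/
def z : Sp → ℝ
  | Sp.P => 3
  | Sp.N => -1

/-- A mesh of `[0,1]`: edge points `xe 0 = x_{1/2} = 0 < xe 1 = x_{3/2} < … < xe I = x_{I+1/2} = 1`. -/
structure Mesh where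
  I : ℕ
  hI : 1 ≤ I
  xe : ℕ → ℝ
  xe0 : xe 0 = 0
  xeI : xe I = 1
  mono : ∀ j, j < I → xe j < xe (j + 1)

namespace Mesh

variable (m : Mesh)

/-- cell centers `x_i` for `1 ≤ i ≤ I` , with `x_0 = 0` and `x_{I+1} = 1`. -/
def xc (i : ℕ) : ℝ :=
  if i = 0 then 0 else if i = m.I + 1 then 1 else (m.xe (i - 1) + m.xe i) / 2

/-- `h_i = x_{i+1/2} - x_{i-1/2}` for `1 ≤ i ≤ I`. -/
def h (i : ℕ) : ℝ := m.xe i - m.xe (i - 1)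

/-- `h_{i+1/2} = x_{i+1} - x_i` for `0 ≤ i ≤ I`. -/
def hp (i : ℕ) : ℝ := m.xc (i + 1) - m.xc i

/-- mesh size `h = max_{1 ≤ i ≤ I} h_i`. -/
def size : ℝ := (Finset.Icc 1 m.I).sup' ⟨1, Finset.mem_Icc.mpr ⟨le_refl 1, m.hI⟩⟩ m.h

/-- piecewise constant function associated to a vector `(w_i)_{0 ≤ i ≤ I+1}`:
equal to `w i` on `(x_{i-1/2}, x_{i+1/2})`, to `w 0` at `x = 0`, to `w (I+1)` at `x = 1`. -/
def pw (w : ℕ → ℝ) (x : ℝ) : ℝ :=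
  if x = 0 then w 0 else if x = 1 then w (m.I + 1) else w (sInf {i : ℕ | x < m.xe i})

/-- square of the discrete `H¹` norm `‖w_h‖_{1,T}`. -/
def norm1sq (w : ℕ → ℝ) : ℝ :=
  (∑ i ∈ Finset.range (m.I + 1), (w (i + 1) - w i) ^ 2 / m.hp i) + w 0 ^ 2 + w (m.I + 1) ^ 2

/-- square of the discrete `L²` norm `‖w_h‖_0`. -/
def norm0sq (w : ℕ → ℝ) : ℝ := ∑ i ∈ Finset.Icc 1 m.I, m.h i * w i ^ 2

/-- the discrete dual norm `‖w_h‖_{-1,2,T}`. -/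
def normDual (w : ℕ → ℝ) : ℝ :=
  sSup {r : ℝ | ∃ v : ℕ → ℝ, m.norm1sq v ≤ 1 ∧
    r = ∫ x in Set.Ioo (0:ℝ) 1, m.pw w x * m.pw v x}

/-- piecewise constant space derivative: on `(x_i, x_{i+1})` it equals `(w_{i+1} - w_i)/h_{i+1/2}`. -/
def dpw (w : ℕ → ℝ) (x : ℝ) : ℝ :=
  (w (sInf {i : ℕ | x < m.xc (i + 1)} + 1) - w (sInf {i : ℕ | x < m.xc (i + 1)})) /
    m.hp (sInf {i : ℕ | x < m.xc (i + 1)})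

end Mesh

/-- All the data of the corrosion model. -/
structure Data where
  lam : ℝ
  eps : ℝ
  alpha0 : ℝ
  alpha1 : ℝ
  V : ℝ
  rho : ℝ
  dPsi0 : ℝ
  dPsi1 : ℝ
  umax : Sp → ℝ
  m0 : Sp → ℝ
  k0 : Sp → ℝ
  m1 : Sp → ℝ
  k1 : Sp → ℝ
  a0 : Sp → ℝ
  b0 : Sp → ℝ
  a1 : Sp → ℝ
  b1 : Sp → ℝ
  u0 : Sp → ℝ → ℝ
  lam_pos : 0 < lam
  umax_pos : ∀ u, 0 < umax u
  m0_pos : ∀ u, 0 < m0 u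
  k0_pos : ∀ u, 0 < k0 u
  m1_pos : ∀ u, 0 < m1 u
  k1_pos : ∀ u, 0 < k1 u
  a0_mem : ∀ u, a0 u ∈ Set.Icc (0:ℝ) 1
  b0_mem : ∀ u, b0 u ∈ Set.Icc (0:ℝ) 1
  a1_mem : ∀ u, a1 u ∈ Set.Icc (0:ℝ) 1
  b1_mem : ∀ u, b1 u ∈ Set.Icc (0:ℝ) 1
  u0_meas : ∀ u, Measurable (u0 u)

namespace Data
variable (d : Data)

/-- `ε_P = 1`, `ε_N = ε`. -/
def epsu : Sp → ℝ
  | Sp.P => 1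
  | Sp.N => d.eps

def beta0 (u : Sp) (x : ℝ) : ℝ :=
  d.m0 u * Real.exp (-(z u) * d.b0 u * x) + d.k0 u * Real.exp (z u * d.a0 u * x)

def beta1 (u : Sp) (x : ℝ) : ℝ :=
  d.m1 u * Real.exp (-(z u) * d.b1 u * x) + d.k1 u * Real.exp (z u * d.a1 u * x)

def gamma0 (u : Sp) (x : ℝ) : ℝ := d.m0 u * d.umax u * Real.exp (-(z u) * d.b0 u * x)

def gamma1 (u : Sp) (x : ℝ) : ℝ := d.k1 u * d.umax u * Real.exp (z u * d.a1 u * x)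

/-- Hypotheses (H). -/
def HypH : Prop :=
  (3 * d.umax Sp.P - d.umax Sp.N + d.rho = 0) ∧
  (∀ u, ∀ᵐ x ∂(volume.restrict (Set.Ioo (0:ℝ) 1)), 0 ≤ d.u0 u x ∧ d.u0 u x ≤ d.umax u) ∧
  (-(1 / (3 * d.a0 Sp.P)) * (1 + Real.log (d.alpha0 * d.a0 Sp.P * d.k0 Sp.P)) ≤ d.dPsi0 ∧
    d.dPsi0 ≤ (1 / d.a0 Sp.N) * (1 + Real.log (d.alpha0 * d.a0 Sp.N * d.k0 Sp.N))) ∧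
  (-(1 / d.b1 Sp.N) * (1 + Real.log (d.alpha1 * d.b1 Sp.N * d.m1 Sp.N)) ≤ d.dPsi1 ∧
    d.dPsi1 ≤ (1 / (3 * d.b1 Sp.P)) * (1 + Real.log (d.alpha1 * d.b1 Sp.P * d.m1 Sp.P)))

end Data

/-- `dΨ_{i+1/2} = (Ψ_{i+1} - Ψ_i)/h_{i+1/2}`. -/
def dPsiF (m : Mesh) (Psi : ℕ → ℝ) (i : ℕ) : ℝ := (Psi (i + 1) - Psi i) / m.hp i

/-- the Scharfetter-Gummel numerical flux `F_{u,i+1/2}`. -/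
def Flux (m : Mesh) (d : Data) (u : Sp) (Psi w : ℕ → ℝ) (i : ℕ) : ℝ :=
  (Bern (z u * m.hp i * dPsiF m Psi i) * w i -
    Bern (-(z u) * m.hp i * dPsiF m Psi i) * w (i + 1)) / m.hp i

/-- The fully implicit scheme (S), with time step `Δt = T / K`.
`sol u k i` is `u_i^k` (for `u = P, N`) and `Psi k i` is `Ψ_i^k`. -/
def Scheme (m : Mesh) (d : Data) (T : ℝ) (K : ℕ)
    (sol : Sp → ℕ → ℕ → ℝ) (Psi : ℕ → ℕ → ℝ) : Prop :=
  (∀ u i, 1 ≤ i → i ≤ m.I →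
    sol u 0 i = (1 / m.h i) * ∫ x in Set.Ioo (m.xe (i - 1)) (m.xe i), d.u0 u x) ∧
  (∀ k, k < K → ∀ i, 1 ≤ i → i ≤ m.I →
    -(d.lam ^ 2) * (dPsiF m (Psi (k + 1)) i - dPsiF m (Psi (k + 1)) (i - 1)) =
      m.h i * (3 * sol Sp.P (k + 1) i - sol Sp.N (k + 1) i + d.rho)) ∧
  (∀ u k, k < K → ∀ i, 1 ≤ i → i ≤ m.I →
    d.epsu u * m.h i * (sol u (k + 1) i - sol u k i) / (T / K) +
      Flux m d u (Psi (k + 1)) (sol u (k + 1)) i -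
      Flux m d u (Psi (k + 1)) (sol u (k + 1)) (i - 1) = 0) ∧
  (∀ k, k < K → Psi (k + 1) 0 - d.alpha0 * dPsiF m (Psi (k + 1)) 0 = d.dPsi0) ∧
  (∀ k, k < K →
    Psi (k + 1) (m.I + 1) + d.alpha1 * dPsiF m (Psi (k + 1)) m.I = d.V - d.dPsi1) ∧
  (∀ u k, k < K →
    -(Flux m d u (Psi (k + 1)) (sol u (k + 1)) 0) =
      d.beta0 u (Psi (k + 1) 0) * sol u (k + 1) 0 - d.gamma0 u (Psi (k + 1) 0)) ∧
  (∀ u k, k < K →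
    Flux m d u (Psi (k + 1)) (sol u (k + 1)) m.I =
      d.beta1 u (d.V - Psi (k + 1) (m.I + 1)) * sol u (k + 1) (m.I + 1) -
      d.gamma1 u (d.V - Psi (k + 1) (m.I + 1)))

/-- The stability property `0 ≤ u_i^k ≤ u^max` for all `i, k`. -/
def Stable (m : Mesh) (d : Data) (K : ℕ) (sol : Sp → ℕ → ℕ → ℝ) : Prop :=
  ∀ u k, k ≤ K → ∀ i, i ≤ m.I + 1 → 0 ≤ sol u k i ∧ sol u k i ≤ d.umax u

/-- the approximate space-time solution `w_{h,Δt}`, equal to the piecewise constant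
function built on `w^{k+1}` for `t ∈ [t^k, t^{k+1})`, with `Δt = T/K`. -/
def apx (m : Mesh) (T : ℝ) (K : ℕ) (w : ℕ → ℕ → ℝ) (x t : ℝ) : ℝ :=
  m.pw (w (Nat.floor (t / (T / K)) + 1)) x

/-- the discrete space derivative `∂_{x,T} w_{h,Δt}`. -/
def dapx (m : Mesh) (T : ℝ) (K : ℕ) (w : ℕ → ℕ → ℝ) (x t : ℝ) : ℝ :=
  m.dpw (w (Nat.floor (t / (T / K)) + 1)) x


/-- hyperbolic cotangent `coth y = cosh y / sinh y`. -/
def coth (x : ℝ) : ℝ := Real.cosh x / Real.sinh x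

/-- approximate trace at `x = 0`: `t ∈ [t^k, t^{k+1}) ↦ w_0^{k+1}`. -/
def trace0 (T : ℝ) (K : ℕ) (w : ℕ → ℕ → ℝ) (t : ℝ) : ℝ :=
  w (Nat.floor (t / (T / K)) + 1) 0

/-- approximate trace at `x = 1`: `t ∈ [t^k, t^{k+1}) ↦ w_{I+1}^{k+1}`. -/
def trace1 (m : Mesh) (T : ℝ) (K : ℕ) (w : ℕ → ℕ → ℝ) (t : ℝ) : ℝ :=
  w (Nat.floor (t / (T / K)) + 1) (m.I + 1)

/-- the measure on `(0,1) × (0,T)` (space × time). -/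
def stMeasure (T : ℝ) : MeasureTheory.Measure (ℝ × ℝ) :=
  (MeasureTheory.volume.restrict (Set.Ioo (0:ℝ) 1)).prod
    (MeasureTheory.volume.restrict (Set.Ioo (0:ℝ) T))

end Corrosion

/-!
Fix a time step and write `ψ = Ψ^{k+1}`, `f_i = 3P_i - N_i + ρ_hl`. Testing the discrete Poisson
equation against `ψ` and summing by parts gives
`λ² (|ψ|²_{1,T} + dΨ_{1/2} ψ_0 - dΨ_{I+1/2} ψ_{I+1}) = Σ h_i f_i ψ_i`.
The Robin boundary conditions bound the boundary terms from below by `ψ_0² / (2α_0)` and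
`ψ_{I+1}² / (2α_1)` minus data-dependent constants, while stability bounds `|f_i|` and the
one-dimensional discrete Sobolev inequality `|ψ_i| ≤ |ψ_0| + |ψ|_{1,T}` bounds the right-hand
side by a multiple of the square root of the left-hand side, which is then absorbed.
-/

open Finset

namespace Corrosion

lemma sum_Icc_sub_pred (g : ℕ → ℝ) (n : ℕ) :
    ∑ i ∈ Icc 1 n, (g i - g (i - 1)) = g n - g 0 := by
  induction n with
  | zero => simp
  | succ n ih =>
    rw [sum_Icc_succ_top (by omega), ih, Nat.add_sub_cancel]
    ring

lemma sum_Icc_sub_mul_eq (D w : ℕ → ℝ) (n : ℕ) :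
    ∑ i ∈ Icc 1 n, (D (i - 1) - D i) * w i =
      ∑ i ∈ range (n + 1), D i * (w (i + 1) - w i) + D 0 * w 0 - D n * w (n + 1) := by
  induction n with
  | zero => simp; ring
  | succ n ih =>
    rw [sum_Icc_succ_top (by omega), ih, sum_range_succ _ (n + 1), Nat.add_sub_cancel]
    ring

lemma sq_sub_sq_div_le_mul_of_mul_eq {α a x D : ℝ} (hα : 0 < α) (h : α * D = x - a) :
    (x ^ 2 - a ^ 2) / (2 * α) ≤ D * x := by
  rw [div_le_iff₀ (by positivity)]
  have : D * x * (2 * α) = 2 * x * (x - a) := by linear_combination 2 * x * h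
  nlinarith [sq_nonneg (x - a)]

lemma le_two_mul_add_sq_of_le_add_mul_sqrt {S A c : ℝ} (hS : 0 ≤ S) (h : S ≤ A + c * √S) :
    S ≤ 2 * A + c ^ 2 := by
  nlinarith [sq_sqrt hS, sq_nonneg (√S - c)]

lemma sum_range_div_mul_le {T C : ℝ} {K : ℕ} (hT : 0 < T) (hK : 1 ≤ K) {x : ℕ → ℝ}
    (hx : ∀ k < K, x k ≤ C) : ∑ k ∈ range K, T / K * x k ≤ C * T := by
  have hK' : (0 : ℝ) < K := by exact_mod_cast hK
  calc ∑ k ∈ range K, T / K * x k ≤ ∑ _k ∈ range K, T / K * C :=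
        sum_le_sum fun k hk => mul_le_mul_of_nonneg_left (hx k (mem_range.mp hk)) (by positivity)
    _ = C * T := by rw [sum_const, card_range, nsmul_eq_mul]; field_simp

namespace Mesh

variable (m : Mesh)

/-- The discrete `H¹` seminorm `|w|²_{1,T}`. -/
def dirichletSq (w : ℕ → ℝ) : ℝ :=
  ∑ i ∈ range (m.I + 1), (w (i + 1) - w i) ^ 2 / m.hp i

lemma norm1sq_eq (w : ℕ → ℝ) :
    m.norm1sq w = m.dirichletSq w + w 0 ^ 2 + w (m.I + 1) ^ 2 := rfl

lemma xc_zero : m.xc 0 = 0 := by simp [xc]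

lemma xc_I_add_one : m.xc (m.I + 1) = 1 := by simp [xc]

lemma xc_of_mem {i : ℕ} (h1 : 1 ≤ i) (h2 : i ≤ m.I) : m.xc i = (m.xe (i - 1) + m.xe i) / 2 := by
  rw [xc, if_neg (by omega), if_neg (by omega)]

lemma xe_pred_lt {i : ℕ} (h1 : 1 ≤ i) (h2 : i ≤ m.I) : m.xe (i - 1) < m.xe i := by
  simpa [Nat.sub_add_cancel h1] using m.mono (i - 1) (by omega)

lemma h_pos {i : ℕ} (h1 : 1 ≤ i) (h2 : i ≤ m.I) : 0 < m.h i :=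
  sub_pos.mpr (m.xe_pred_lt h1 h2)

lemma hp_pos {i : ℕ} (hi : i ≤ m.I) : 0 < m.hp i := by
  rw [hp, sub_pos]
  rcases Nat.eq_zero_or_pos i with rfl | h1
  · have := m.xe_pred_lt le_rfl m.hI
    rw [xc_zero, m.xc_of_mem le_rfl m.hI]
    simp only [Nat.sub_self, m.xe0] at this ⊢
    linarith
  · rcases hi.eq_or_lt with rfl | hlt
    · have := m.xe_pred_lt h1 le_rfl
      rw [xc_I_add_one, m.xc_of_mem h1 le_rfl]
      linarith [m.xeI]
    · have := m.xe_pred_lt h1 hi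
      have := m.xe_pred_lt (i := i + 1) (by omega) hlt
      rw [m.xc_of_mem h1 hi, m.xc_of_mem (i := i + 1) (by omega) hlt, Nat.add_sub_cancel]
      rw [Nat.add_sub_cancel] at this
      linarith

lemma sum_hp : ∑ i ∈ range (m.I + 1), m.hp i = 1 := by
  simp only [hp, sum_range_sub, xc_I_add_one, xc_zero, sub_zero]

lemma sum_h : ∑ i ∈ Icc 1 m.I, m.h i = 1 := by
  simp only [h, sum_Icc_sub_pred, m.xeI, m.xe0, sub_zero]

lemma dirichletSq_nonneg (w : ℕ → ℝ) : 0 ≤ m.dirichletSq w :=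
  sum_nonneg fun _ hi =>
    div_nonneg (sq_nonneg _) (m.hp_pos (Nat.le_of_lt_succ (mem_range.mp hi))).le

/-- Discrete Sobolev inequality: Cauchy–Schwarz against the weights `h_{j+1/2}`, which sum to 1. -/
lemma abs_sub_le_sqrt_dirichletSq (w : ℕ → ℝ) {i : ℕ} (hi : i ≤ m.I + 1) :
    |w i - w 0| ≤ √(m.dirichletSq w) := by
  have hcs : (∑ j ∈ range (m.I + 1), |w (j + 1) - w j|) ^ 2 ≤ m.dirichletSq w := by
    simpa [dirichletSq, sum_hp, sq_abs] using
      sq_sum_div_le_sum_sq_div (range (m.I + 1)) (fun j => |w (j + 1) - w j|) (fun j hj => m.hp_pos (Nat.le_of_lt_succ (mem_range.mp hj)))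
  calc |w i - w 0| = |∑ j ∈ range i, (w (j + 1) - w j)| := by rw [sum_range_sub]
    _ ≤ ∑ j ∈ range i, |w (j + 1) - w j| := abs_sum_le_sum_abs _ _
    _ ≤ ∑ j ∈ range (m.I + 1), |w (j + 1) - w j| :=
        sum_le_sum_of_subset_of_nonneg (range_subset_range.mpr hi) fun _ _ _ => abs_nonneg _
    _ ≤ √(m.dirichletSq w) := le_sqrt_of_sq_le hcs

lemma abs_le_abs_zero_add_sqrt_dirichletSq (w : ℕ → ℝ) {i : ℕ} (hi : i ≤ m.I + 1) :
    |w i| ≤ |w 0| + √(m.dirichletSq w) := by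
  linarith [abs_sub_abs_le_abs_sub (w i) (w 0), m.abs_sub_le_sqrt_dirichletSq w hi]

lemma sum_h_mul_mul_le {f : ℕ → ℝ} {M : ℝ} (hf : ∀ i, 1 ≤ i → i ≤ m.I → |f i| ≤ M)
    (w : ℕ → ℝ) :
    ∑ i ∈ Icc 1 m.I, m.h i * f i * w i ≤ M * (|w 0| + √(m.dirichletSq w)) := by
  calc ∑ i ∈ Icc 1 m.I, m.h i * f i * w i
      ≤ ∑ i ∈ Icc 1 m.I, m.h i * (M * (|w 0| + √(m.dirichletSq w))) := by
        refine sum_le_sum fun i hi => ?_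
        obtain ⟨h1, h2⟩ := mem_Icc.mp hi
        rw [mul_assoc]
        refine mul_le_mul_of_nonneg_left ?_ (m.h_pos h1 h2).le
        calc f i * w i ≤ |f i| * |w i| := abs_mul (f i) (w i) ▸ le_abs_self _
          _ ≤ M * (|w 0| + √(m.dirichletSq w)) :=
            mul_le_mul (hf i h1 h2) (m.abs_le_abs_zero_add_sqrt_dirichletSq w (by omega))
              (abs_nonneg _) ((abs_nonneg _).trans (hf i h1 h2))
    _ = M * (|w 0| + √(m.dirichletSq w)) := by rw [← sum_mul, sum_h, one_mul]

lemma sum_Icc_sub_dPsiF_mul_eq (w : ℕ → ℝ) :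
    ∑ i ∈ Icc 1 m.I, (dPsiF m w (i - 1) - dPsiF m w i) * w i =
      m.dirichletSq w + dPsiF m w 0 * w 0 - dPsiF m w m.I * w (m.I + 1) := by
  rw [sum_Icc_sub_mul_eq, dirichletSq]
  congr 2
  exact sum_congr rfl fun i _ => by rw [dPsiF]; ring

def robinEnergy (α₀ α₁ : ℝ) (w : ℕ → ℝ) : ℝ :=
  m.dirichletSq w + w 0 ^ 2 / (2 * α₀) + w (m.I + 1) ^ 2 / (2 * α₁)

variable {α₀ α₁ : ℝ} (hα₀ : 0 < α₀) (hα₁ : 0 < α₁) (w : ℕ → ℝ)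
include hα₀ hα₁

lemma dirichletSq_le_robinEnergy : m.dirichletSq w ≤ m.robinEnergy α₀ α₁ w := by
  have : 0 ≤ w 0 ^ 2 / (2 * α₀) := by positivity
  have : 0 ≤ w (m.I + 1) ^ 2 / (2 * α₁) := by positivity
  rw [robinEnergy]
  linarith

lemma robinEnergy_nonneg : 0 ≤ m.robinEnergy α₀ α₁ w :=
  (m.dirichletSq_nonneg w).trans (m.dirichletSq_le_robinEnergy hα₀ hα₁ w)

lemma sq_zero_le_robinEnergy : w 0 ^ 2 ≤ 2 * α₀ * m.robinEnergy α₀ α₁ w := by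
  rw [← div_le_iff₀' (by positivity), robinEnergy]
  linarith [m.dirichletSq_nonneg w, (by positivity : 0 ≤ w (m.I + 1) ^ 2 / (2 * α₁))]

lemma sq_I_add_one_le_robinEnergy : w (m.I + 1) ^ 2 ≤ 2 * α₁ * m.robinEnergy α₀ α₁ w := by
  rw [← div_le_iff₀' (by positivity), robinEnergy]
  linarith [m.dirichletSq_nonneg w, (by positivity : 0 ≤ w 0 ^ 2 / (2 * α₀))]

lemma norm1sq_le_robinEnergy :
    m.norm1sq w ≤ (1 + 2 * α₀ + 2 * α₁) * m.robinEnergy α₀ α₁ w := by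
  rw [norm1sq_eq]
  linarith [m.dirichletSq_le_robinEnergy hα₀ hα₁ w, m.sq_zero_le_robinEnergy hα₀ hα₁ w,
    m.sq_I_add_one_le_robinEnergy hα₀ hα₁ w]

lemma abs_zero_add_sqrt_dirichletSq_le :
    |w 0| + √(m.dirichletSq w) ≤ (1 + √(2 * α₀)) * √(m.robinEnergy α₀ α₁ w) := by
  have : |w 0| ≤ √(2 * α₀) * √(m.robinEnergy α₀ α₁ w) := by
    rw [← sqrt_mul (by positivity)]
    exact abs_le_sqrt (m.sq_zero_le_robinEnergy hα₀ hα₁ w)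
  linarith [sqrt_le_sqrt (m.dirichletSq_le_robinEnergy hα₀ hα₁ w)]

end Mesh

def potentialBound (lam α₀ α₁ a b M : ℝ) : ℝ :=
  (1 + 2 * α₀ + 2 * α₁) * (a ^ 2 / α₀ + b ^ 2 / α₁ + (M / lam ^ 2 * (1 + √(2 * α₀))) ^ 2)

lemma potentialBound_nonneg {lam α₀ α₁ : ℝ} (hα₀ : 0 < α₀) (hα₁ : 0 < α₁) (a b M : ℝ) :
    0 ≤ potentialBound lam α₀ α₁ a b M := by
  unfold potentialBound
  positivity

theorem Mesh.norm1sq_le_potentialBound (m : Mesh) {lam α₀ α₁ a b M : ℝ} (hlam : 0 < lam)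
    (hα₀ : 0 < α₀) (hα₁ : 0 < α₁) {ψ f : ℕ → ℝ}
    (hpoisson : ∀ i, 1 ≤ i → i ≤ m.I →
      -(lam ^ 2) * (dPsiF m ψ i - dPsiF m ψ (i - 1)) = m.h i * f i)
    (hf : ∀ i, 1 ≤ i → i ≤ m.I → |f i| ≤ M)
    (h0 : ψ 0 - α₀ * dPsiF m ψ 0 = a) (h1 : ψ (m.I + 1) + α₁ * dPsiF m ψ m.I = b) :
    m.norm1sq ψ ≤ potentialBound lam α₀ α₁ a b M := by
  set S := m.robinEnergy α₀ α₁ ψ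
  set A := a ^ 2 / (2 * α₀) + b ^ 2 / (2 * α₁)
  set c := M / lam ^ 2 * (1 + √(2 * α₀)) with hcdef
  have hM : 0 ≤ M := (abs_nonneg _).trans (hf 1 le_rfl m.hI)
  have hgreen : lam ^ 2 * (m.dirichletSq ψ + dPsiF m ψ 0 * ψ 0 - dPsiF m ψ m.I * ψ (m.I + 1)) ≤
      M * (|ψ 0| + √(m.dirichletSq ψ)) := by
    rw [← m.sum_Icc_sub_dPsiF_mul_eq, mul_sum]
    refine le_of_eq_of_le (sum_congr rfl fun i hi => ?_) (m.sum_h_mul_mul_le hf ψ)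
    obtain ⟨hi1, hi2⟩ := mem_Icc.mp hi
    linear_combination ψ i * hpoisson i hi1 hi2
  have hboundary : S - A ≤
      m.dirichletSq ψ + dPsiF m ψ 0 * ψ 0 - dPsiF m ψ m.I * ψ (m.I + 1) := by
    have h₀ : (ψ 0 ^ 2 - a ^ 2) / (2 * α₀) ≤ dPsiF m ψ 0 * ψ 0 :=
      sq_sub_sq_div_le_mul_of_mul_eq hα₀ (by linarith)
    have h₁ : (ψ (m.I + 1) ^ 2 - b ^ 2) / (2 * α₁) ≤ -dPsiF m ψ m.I * ψ (m.I + 1) :=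
      sq_sub_sq_div_le_mul_of_mul_eq hα₁ (by linarith)
    rw [sub_div] at h₀ h₁
    simp only [S, A, Mesh.robinEnergy]
    linarith
  have hS : lam ^ 2 * (S - A) ≤ lam ^ 2 * (c * √S) :=
    calc _ ≤ lam ^ 2 * (m.dirichletSq ψ + dPsiF m ψ 0 * ψ 0 - dPsiF m ψ m.I * ψ (m.I + 1)) :=
          mul_le_mul_of_nonneg_left hboundary (by positivity)
      _ ≤ M * ((1 + √(2 * α₀)) * √S) :=
          hgreen.trans (by gcongr; exact m.abs_zero_add_sqrt_dirichletSq_le hα₀ hα₁ ψ)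
      _ = lam ^ 2 * (c * √S) := by rw [hcdef]; field_simp
  calc m.norm1sq ψ ≤ (1 + 2 * α₀ + 2 * α₁) * S := m.norm1sq_le_robinEnergy hα₀ hα₁ ψ
    _ ≤ (1 + 2 * α₀ + 2 * α₁) * (2 * A + c ^ 2) := by
      gcongr
      refine le_two_mul_add_sq_of_le_add_mul_sqrt (m.robinEnergy_nonneg hα₀ hα₁ ψ) ?_
      linarith [le_of_mul_le_mul_left hS (by positivity)]
    _ = potentialBound lam α₀ α₁ a b M := by rw [potentialBound]; ring

lemma Stable.abs_charge_le {m : Mesh} {d : Data} {K : ℕ} {sol : Sp → ℕ → ℕ → ℝ}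
    (hs : Stable m d K sol) {k i : ℕ} (hk : k ≤ K) (hi : i ≤ m.I + 1) :
    |3 * sol Sp.P k i - sol Sp.N k i + d.rho| ≤ 3 * d.umax Sp.P + d.umax Sp.N + |d.rho| := by
  obtain ⟨hP0, hP⟩ := hs Sp.P k hk i hi
  obtain ⟨hN0, hN⟩ := hs Sp.N k hk i hi
  rw [abs_le]
  constructor <;> linarith [le_abs_self d.rho, neg_abs_le d.rho]

end Corrosion

open Corrosion in
theorem discrete_H1_estimate_potential_general
    (d : Data) (ha0 : 0 < d.alpha0) (ha1 : 0 < d.alpha1) :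
    ∃ C : ℝ, 0 < C ∧ ∀ (T : ℝ), 0 < T → ∀ (K : ℕ), 1 ≤ K → ∀ (m : Mesh)
      (sol : Sp → ℕ → ℕ → ℝ) (Psi : ℕ → ℕ → ℝ),
      Scheme m d T K sol Psi → Stable m d K sol →
      (∀ k, k < K → m.norm1sq (Psi (k + 1)) ≤ C) ∧
      (∑ k ∈ Finset.range K, T / K * m.norm1sq (Psi (k + 1))) ≤ C * T := by
  set B := potentialBound d.lam d.alpha0 d.alpha1 d.dPsi0 (d.V - d.dPsi1)
    (3 * d.umax Sp.P + d.umax Sp.N + |d.rho|)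
  have hB : 0 ≤ B := potentialBound_nonneg ha0 ha1 _ _ _
  refine ⟨B + 1, by linarith, fun T hT K hK m sol Psi hS hstable => ?_⟩
  obtain ⟨-, hpoisson, -, hrobin₀, hrobin₁, -, -⟩ := hS
  have hstep : ∀ k < K, m.norm1sq (Psi (k + 1)) ≤ B + 1 := fun k hk =>
    (m.norm1sq_le_potentialBound d.lam_pos ha0 ha1 (hpoisson k hk)
      (fun i _ hi => hstable.abs_charge_le (by omega) (by omega))
      (hrobin₀ k hk) (hrobin₁ k hk)).trans (by linarith)
  exact ⟨hstep, sum_range_div_mul_le hT hK hstep⟩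

open Corrosion in
/-- discrete `H¹` estimate on the potential, uniform in the mesh,
the time step and the time index. -/
theorem discrete_H1_estimate_potential
    (d : Data) (heps : 0 ≤ d.eps) (ha0 : 0 < d.alpha0) (ha1 : 0 < d.alpha1) (hH : d.HypH) :
    ∃ C : ℝ, 0 < C ∧ ∀ (T : ℝ), 0 < T → ∀ (K : ℕ), 1 ≤ K → ∀ (m : Mesh)
      (sol : Sp → ℕ → ℕ → ℝ) (Psi : ℕ → ℕ → ℝ),
      Scheme m d T K sol Psi → Stable m d K sol →
      (∀ k, k < K → m.norm1sq (Psi (k + 1)) ≤ C) ∧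
      (∑ k ∈ Finset.range K, T / K * m.norm1sq (Psi (k + 1))) ≤ C * T :=
  discrete_H1_estimate_potential_general d ha0 ha1
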